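/- For every prime r ≥ 7, the Laurent polynomial u₀(v) = v⁶ − v⁻⁶ + 4(v⁻⁴ − v⁴) + 5(v² − v⁻²) does not lie in the ideal of ℤ[v^{±1}] generated by r and (v⁻¹ − v)^r. -/
import Mathlib


open LaurentPolynomial Polynomial

/-- The Laurent polynomial `u₀(v) = v⁶ − v⁻⁶ + 4(v⁻⁴ − v⁴) + 5(v² − v⁻²)`. -/
noncomputable def u0 : LaurentPolynomial ℤ :=
  T 6 - T (-6) + 4 * (T (-4) - T 4) + 5 * (T 2 - T (-2))

lemma idA : (Polynomial.toLaurent (((X:ℤ[X])^2-1)^5 * (X^2+1))) = u0 * T 6 := by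
  have : (((X:ℤ[X])^2-1)^5 * (X^2+1)) = X^12 - 4*X^10 + 5*X^8 - 5*X^4 + 4*X^2 - 1 := by ring
  rw [this]
  simp only [u0, map_sub, map_add, map_mul, map_pow, map_one, map_ofNat,
    Polynomial.toLaurent_X_pow]
  simp only [mul_add, add_mul, sub_mul, mul_sub, ← T_add]
  norm_num
  ring

lemma idB : (Polynomial.toLaurent (1 - (X:ℤ[X])^2)) = (T (-1) - T 1) * T 1 := by
  simp only [map_sub, map_one, map_pow, Polynomial.toLaurent_X_pow, sub_mul, ← T_add]
  norm_num

theorem stmt_6 (r : ℕ) (hr : r.Prime) (hr7 : 7 ≤ r) :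
    u0 ∉ Ideal.span ({(r : LaurentPolynomial ℤ), (T (-1) - T 1) ^ r} :
      Set (LaurentPolynomial ℤ)) := by

  intro hmem
  rw [Ideal.mem_span_pair] at hmem
  obtain ⟨c, b, hcb⟩ := hmem
  obtain ⟨n1, p, hp⟩ := exists_T_pow c
  obtain ⟨n2, q, hq⟩ := exists_T_pow b
  have key : Polynomial.toLaurent ((X:ℤ[X]) ^ (r + n1 + n2) * (((X:ℤ[X])^2-1)^5 * (X^2+1)))
      = Polynomial.toLaurent ((r:ℤ[X]) * p * X ^ (6 + r + n2) + q * X ^ (6 + n1) * (1 - X^2)^r) := by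
    rw [map_mul, Polynomial.toLaurent_X_pow, idA]
    simp only [map_mul, map_add, map_pow, Polynomial.toLaurent_X_pow, map_natCast, hp, hq, idB]
    rw [← hcb, mul_pow, T_pow, mul_one]
    push_cast
    simp only [Nat.cast_add, Nat.cast_ofNat, T_add, Polynomial.toLaurent_X, T_pow, mul_one]
    ring
  have E := Polynomial.toLaurent_injective key
  -- map to ZMod r
  have E2 := congrArg (Polynomial.map (Int.castRingHom (ZMod r))) E
  simp only [Polynomial.map_mul, Polynomial.map_add, Polynomial.map_pow, Polynomial.map_sub,
    Polynomial.map_one, Polynomial.map_natCast, Polynomial.map_X, CharP.cast_eq_zero,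
    zero_mul, zero_add] at E2
  haveI := Fact.mk hr
  set g : (ZMod r)[X] := X ^ (r + n1 + n2) * (X + 1) ^ 5 * (X ^ 2 + 1) with hg
  have hdvd : ((X : (ZMod r)[X]) - 1) ^ r ∣ (X - 1) ^ 5 * g := by
    have : ((X : (ZMod r)[X]) - 1) ^ 5 * g
        = X ^ (r + n1 + n2) * ((X ^ 2 - 1) ^ 5 * (X ^ 2 + 1)) := by rw [hg]; ring
    rw [this, E2]
    exact Dvd.dvd.mul_left (pow_dvd_pow_of_dvd ⟨-(X + 1), by ring⟩ r) _
  have hx1 : ((X : (ZMod r)[X]) - 1) ≠ 0 := by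
    have := Polynomial.X_sub_C_ne_zero (R := ZMod r) (1 : ZMod r)
    simpa using this
  have hdvd2 : ((X : (ZMod r)[X]) - 1) ∣ g := by
    have h5r : 5 + (r - 5) = r := by omega
    have h2 : ((X : (ZMod r)[X]) - 1) ^ 5 * (X - 1) ^ (r - 5) ∣ (X - 1) ^ 5 * g := by
      rw [← pow_add, h5r]; exact hdvd
    exact (dvd_pow_self _ (by omega : r - 5 ≠ 0)).trans
      ((mul_dvd_mul_iff_left (pow_ne_zero 5 hx1)).mp h2)
  obtain ⟨k, hk⟩ := hdvd2
  have h0 : Polynomial.eval (1 : ZMod r) g = 0 := by rw [hk]; simp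
  rw [hg] at h0
  simp at h0
  have h2 : ((2 : ℕ) : ZMod r) = 0 := by push_cast; linear_combination h0
  have : r ∣ 2 := (CharP.cast_eq_zero_iff (ZMod r) r 2).mp h2
  have := Nat.le_of_dvd (by norm_num) this
  omega
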